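/- arXiv:2302.06722 — 2 statements merged into one kernel-verified Lean document; each statement's English description precedes it below -/
import Mathlib

section
/- Let X and Y be topological vector spaces over ℝ, let (T_n)_{n≥1} and T be continuous linear maps from X to Y, and let D be a dense subset of X. Then the following are equivalent: (i) T_n x → T x for every x ∈ X; (ii) T_n x → T x for every x ∈ D, and the sequence (T_n) is asymptotically equicontinuous. -/
/-- A sequence `(T n)` of continuous linear maps between topological vector spaces is
*asymptotically equicontinuous* if, for every neighbourhood `V` of `0` in `Y`, the set of
`x ∈ X` such that `T n x ∈ V` for all but finitely many `n` is a neighbourhood of `0` in `X`. -/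
def AsymptoticallyEquicontinuous
    {X Y : Type*} [AddCommGroup X] [Module ℝ X] [TopologicalSpace X]
    [AddCommGroup Y] [Module ℝ Y] [TopologicalSpace Y]
    (T : ℕ → X →L[ℝ] Y) : Prop :=
  ∀ V ∈ nhds (0 : Y), {x : X | ∀ᶠ n in Filter.atTop, T n x ∈ V} ∈ nhds (0 : X)

/-- **Theorem 2.3 (main theorem).** Let `X, Y` be topological vector spaces, let `(T n)` and
`T₀` be continuous linear maps from `X` to `Y`, and let `D` be a dense subset of `X`. Then
`T n x → T₀ x` for all `x ∈ X` iff `T n x → T₀ x` for all `x ∈ D` and `(T n)` is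
asymptotically equicontinuous. -/
theorem asymptoticallyEquicontinuous_dense_convergence
    {X Y : Type*} [AddCommGroup X] [Module ℝ X] [TopologicalSpace X]
    [IsTopologicalAddGroup X] [ContinuousSMul ℝ X]
    [AddCommGroup Y] [Module ℝ Y] [TopologicalSpace Y]
    [IsTopologicalAddGroup Y] [ContinuousSMul ℝ Y]
    (T : ℕ → X →L[ℝ] Y) (T₀ : X →L[ℝ] Y) (D : Set X) (hD : Dense D) :
    (∀ x : X, Filter.Tendsto (fun n => T n x) Filter.atTop (nhds (T₀ x))) ↔
      ((∀ x ∈ D, Filter.Tendsto (fun n => T n x) Filter.atTop (nhds (T₀ x))) ∧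
        AsymptoticallyEquicontinuous T) := by
  constructor
  · intro h
    refine ⟨fun x _ => h x, ?_⟩
    intro V hV
    obtain ⟨W, hW, hWV⟩ := exists_nhds_zero_half hV
    have hU : T₀ ⁻¹' W ∈ nhds (0 : X) := by
      have := T₀.continuous.tendsto (0 : X)
      rw [map_zero] at this
      exact this hW
    filter_upwards [hU] with x hx
    have hVx : V ∈ nhds (T₀ x) := by
      rw [← map_add_left_nhds_zero (T₀ x), Filter.mem_map]
      filter_upwards [hW] with w hw using hWV _ hx _ hw
    exact h x hVx
  · rintro ⟨hconv, hae⟩ x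
    rw [← tendsto_sub_nhds_zero_iff]
    intro V hV
    obtain ⟨W, hW, hWV⟩ := exists_nhds_zero_quarter hV
    have hS : {z : X | ∀ᶠ n in Filter.atTop, T n z ∈ W} ∈ nhds (0 : X) := hae W hW
    have hU : T₀ ⁻¹' W ∈ nhds (0 : X) := by
      have := T₀.continuous.tendsto (0 : X)
      rw [map_zero] at this
      exact this hW
    have h1 : {d : X | x - d ∈ {z : X | ∀ᶠ n in Filter.atTop, T n z ∈ W}} ∈ nhds x := by
      have hc : Filter.Tendsto (fun d : X => x - d) (nhds x) (nhds (0 : X)) := by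
        have hcc : Continuous (fun d : X => x - d) := continuous_const.sub continuous_id
        have := hcc.tendsto x
        simpa using this
      exact hc hS
    have h2 : {d : X | d - x ∈ T₀ ⁻¹' W} ∈ nhds x := by
      have hc : Filter.Tendsto (fun d : X => d - x) (nhds x) (nhds (0 : X)) := by
        have hcc : Continuous (fun d : X => d - x) := continuous_id.sub continuous_const
        have := hcc.tendsto x
        simpa using this
      exact hc hU
    obtain ⟨d, ⟨hd1, hd2⟩, hdD⟩ :=
      mem_closure_iff_nhds.mp (hD x) _ (Filter.inter_mem h1 h2)
    have hE2 : ∀ᶠ n in Filter.atTop, T n d - T₀ d ∈ W :=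
      (tendsto_sub_nhds_zero_iff.mpr (hconv d hdD)) hW
    have h0 : (0 : Y) ∈ W := mem_of_mem_nhds hW
    rw [Filter.mem_map]
    have goal : ∀ᶠ n in Filter.atTop, T n x - T₀ x ∈ V := by
      filter_upwards [hd1, hE2] with n hn1 hn2
      have key : T n x - T₀ x = T n (x - d) + (T n d - T₀ d) + T₀ (d - x) + 0 := by
        simp [map_sub]
      rw [key]
      exact hWV hn1 hn2 hd2 h0
    exact goal
end

section
/- Let X and Y be topological vector spaces over ℝ, let (T_α)_{α∈A} be a net of continuous linear maps from X to Y, let T : X → Y be a continuous linear map, and let D be a dense subset of X. Then the following are equivalent: (i) T_α x → T x for every x ∈ X; (ii) T_α x → T x for every x ∈ D, and the net (T_α) is asymptotically equicontinuous. -/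
/-- A net `(T α)` (indexed by a directed set `A`) of continuous linear maps between topological
vector spaces is *asymptotically equicontinuous* if, for every neighbourhood `V` of `0` in `Y`,
the set of `x ∈ X` for which there exists `α₀` with `T α x ∈ V` for all `α ≥ α₀` is a
neighbourhood of `0` in `X`. -/
def AsymptoticallyEquicontinuousNet
    {A : Type*} [Preorder A] [IsDirected A (· ≤ ·)] [Nonempty A]
    {X Y : Type*} [AddCommGroup X] [Module ℝ X] [TopologicalSpace X]
    [AddCommGroup Y] [Module ℝ Y] [TopologicalSpace Y]
    (T : A → X →L[ℝ] Y) : Prop :=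
  ∀ V ∈ nhds (0 : Y),
    {x : X | ∃ α₀ : A, ∀ α ≥ α₀, T α x ∈ V} ∈ nhds (0 : X)

/-- **Theorem 3.3.** Let `X, Y` be topological vector spaces, let `(T α)` be a net of continuous
linear maps from `X` to `Y`, let `T₀ : X → Y` be a continuous linear map, and let `D` be a dense
subset of `X`. Then `T α x → T₀ x` for all `x ∈ X` iff `T α x → T₀ x` for all `x ∈ D` and
the net `(T α)` is asymptotically equicontinuous. -/
theorem asymptoticallyEquicontinuousNet_dense_convergence
    {A : Type*} [Preorder A] [IsDirected A (· ≤ ·)] [Nonempty A]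
    {X Y : Type*} [AddCommGroup X] [Module ℝ X] [TopologicalSpace X]
    [IsTopologicalAddGroup X] [ContinuousSMul ℝ X]
    [AddCommGroup Y] [Module ℝ Y] [TopologicalSpace Y]
    [IsTopologicalAddGroup Y] [ContinuousSMul ℝ Y]
    (T : A → X →L[ℝ] Y) (T₀ : X →L[ℝ] Y) (D : Set X) (hD : Dense D) :
    (∀ x : X, Filter.Tendsto (fun α => T α x) Filter.atTop (nhds (T₀ x))) ↔
      ((∀ x ∈ D, Filter.Tendsto (fun α => T α x) Filter.atTop (nhds (T₀ x))) ∧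
        AsymptoticallyEquicontinuousNet T) := by
  constructor
  · intro h
    refine ⟨fun x _ => h x, fun V hV => ?_⟩
    obtain ⟨W, hW, hWV⟩ := exists_nhds_zero_half hV
    have hU : T₀ ⁻¹' W ∈ nhds (0 : X) := by
      have h := T₀.continuous.tendsto 0
      rw [map_zero] at h
      exact h hW
    refine Filter.mem_of_superset hU ?_
    intro x hx
    have h1 : Filter.Tendsto (fun α => T α x - T₀ x) Filter.atTop (nhds 0) := by
      simpa using (h x).sub_const (T₀ x)
    have h2 : ∀ᶠ α in Filter.atTop, T α x - T₀ x ∈ W := h1.eventually_mem hW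
    obtain ⟨α₀, hα₀⟩ := Filter.eventually_atTop.1 h2
    refine ⟨α₀, fun α hα => ?_⟩
    have := hWV _ (hα₀ α hα) _ hx
    simpa using this
  · rintro ⟨hconv, heq⟩ x
    rw [← tendsto_sub_nhds_zero_iff]
    intro V hV
    rw [Filter.mem_map]
    obtain ⟨W1, hW1, hW1V⟩ := exists_nhds_zero_half hV
    obtain ⟨W, hW, hWW1⟩ := exists_nhds_zero_half hW1
    -- U : symmetric nbhd from equicontinuity and T₀-continuity
    have hTU : T₀ ⁻¹' W ∈ nhds (0 : X) := by
      have h := T₀.continuous.tendsto 0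
      rw [map_zero] at h
      exact h hW
    have hEU := heq W hW
    have hU : (T₀ ⁻¹' W ∩ {z : X | ∃ α₀ : A, ∀ α ≥ α₀, T α z ∈ W}) ∈ nhds (0 : X) :=
      Filter.inter_mem hTU hEU
    set U := T₀ ⁻¹' W ∩ {z : X | ∃ α₀ : A, ∀ α ≥ α₀, T α z ∈ W} with hUdef
    have hUsymm : -U ∈ nhds (0 : X) := by
      have : Filter.Tendsto (fun z : X => -z) (nhds 0) (nhds (0 : X)) := by
        simpa using (continuous_neg (G := X)).tendsto 0
      exact this hU
    -- pick d ∈ D with x - d ∈ U and d - x ∈ U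
    have hxU : {z : X | x - z ∈ U ∧ z - x ∈ U} ∈ nhds x := by
      have h1 : {z : X | x - z ∈ U} ∈ nhds x := by
        have hc : Filter.Tendsto (fun z : X => x - z) (nhds x) (nhds (x - x)) :=
          (tendsto_const_nhds.sub Filter.tendsto_id)
        rw [sub_self] at hc
        exact hc hU
      have h2 : {z : X | z - x ∈ U} ∈ nhds x := by
        have hc : Filter.Tendsto (fun z : X => z - x) (nhds x) (nhds (x - x)) :=
          (Filter.tendsto_id.sub tendsto_const_nhds)
        rw [sub_self] at hc
        exact hc hU
      exact Filter.inter_mem h1 h2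
    obtain ⟨d, hdD, hdmem⟩ := hD.exists_mem_open isOpen_interior
      ⟨x, mem_interior_iff_mem_nhds.2 hxU⟩
    have hd : x - d ∈ U ∧ d - x ∈ U := by have := interior_subset hdmem; exact this
    obtain ⟨α₁, hα₁⟩ := hd.1.2
    have hconvd : ∀ᶠ α in Filter.atTop, T α d - T₀ d ∈ W1 := by
      have h1 : Filter.Tendsto (fun α => T α d - T₀ d) Filter.atTop (nhds 0) := by
        simpa using (hconv d hdD).sub_const (T₀ d)
      exact h1.eventually_mem hW1
    obtain ⟨α₂, hα₂⟩ := Filter.eventually_atTop.1 hconvd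
    obtain ⟨α₃, h31, h32⟩ := directed_of (· ≤ ·) α₁ α₂
    refine Filter.mem_atTop_sets.2 ⟨α₃, fun α hα => ?_⟩
    have e1 : T α (x - d) ∈ W := hα₁ α (le_trans h31 hα)
    have e2 : T α d - T₀ d ∈ W1 := hα₂ α (le_trans h32 hα)
    have e3 : T₀ (d - x) ∈ W := hd.2.1
    have key : T α x - T₀ x = (T α (x - d) + T₀ (d - x)) + (T α d - T₀ d) := by
      simp [map_sub]
      abel
    have : T α x - T₀ x ∈ V := by
      rw [key]
      exact hW1V _ (hWW1 _ e1 _ e3) _ e2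
    simpa using this
end
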